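/- Let f: G → H be a morphism of flat affine group schemes over a DVR R such that the induced Hopf algebra map f*: R[H] → R[G] is injective. Let V be a representation of H on a finitely generated free R-module. Then an element v ∈ V is semi-invariant for the induced G-action if and only if it is semi-invariant for H; i.e., SI_H(V) = SI_G(V). -/

import Mathlib

open TensorProduct

variable {R : Type} [CommRing R]

/-- `ρ : V → V ⊗ A` is a coaction (comodule structure): counit and coassociativity. -/
def IsCoaction {A V : Type} [CommRing A] [Bialgebra R A]
    [AddCommGroup V] [Module R V] (ρ : V →ₗ[R] V ⊗[R] A) : Prop :=
  (∀ v : V, (TensorProduct.rid R V)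
      ((TensorProduct.map LinearMap.id (Coalgebra.counit (R := R) (A := A))) (ρ v)) = v) ∧
  (∀ v : V, (TensorProduct.assoc R V A A)
      ((TensorProduct.map ρ (LinearMap.id : A →ₗ[R] A)) (ρ v)) =
    (TensorProduct.map (LinearMap.id : V →ₗ[R] V) (Coalgebra.comul (R := R) (A := A))) (ρ v))

/-- `v` is semi-invariant for the coaction `ρ`: the span of `v` is a subcomodule. -/
def IsSemiInvariant {A V : Type} [CommRing A] [Algebra R A]
    [AddCommGroup V] [Module R V] (ρ : V →ₗ[R] V ⊗[R] A) (v : V) : Prop :=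
  ∀ x ∈ Submodule.span R {v},
    ρ x ∈ LinearMap.range
      (TensorProduct.map (Submodule.span R {v}).subtype (LinearMap.id : A →ₗ[R] A))

/-!
Over a DVR, a nonzero vector of a free module is `v = c • w` with `w` unimodular, i.e. `φ w = 1`
for some linear form `φ` (take a coordinate of minimal valuation). Cancelling `c` in the
torsion-free module `V ⊗ B` turns `(id ⊗ f) (σ v) = v ⊗ β` into `(id ⊗ f) (σ w) = w ⊗ β`.
Contracting with `φ` shows `β = f a` for `a = (φ ⊗ id) (σ w)`, and since `id ⊗ f` is injective
(`V` is flat) this gives `σ w = w ⊗ a`, hence `σ v = v ⊗ a`.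
-/

section

variable {V : Type} [AddCommGroup V] [Module R V]

lemma isSemiInvariant_iff_exists_tmul {A : Type} [CommRing A] [Algebra R A]
    (ρ : V →ₗ[R] V ⊗[R] A) (v : V) :
    IsSemiInvariant ρ v ↔ ∃ a : A, ρ v = v ⊗ₜ[R] a := by
  constructor
  · intro h
    have hrange : LinearMap.range (map (Submodule.span R {v}).subtype (LinearMap.id : A →ₗ[R] A))
        ≤ LinearMap.range (TensorProduct.mk R V A v) := by
      rw [TensorProduct.range_map_eq_span_tmul, Submodule.span_le]
      rintro _ ⟨⟨x, hx⟩, a, rfl⟩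
      obtain ⟨r, rfl⟩ := Submodule.mem_span_singleton.mp hx
      exact ⟨r • a, by simp [smul_tmul]⟩
    obtain ⟨a, ha⟩ := hrange (h v (Submodule.mem_span_singleton_self v))
    exact ⟨a, ha.symm⟩
  · rintro ⟨a, ha⟩ x hx
    obtain ⟨r, rfl⟩ := Submodule.mem_span_singleton.mp hx
    exact ⟨⟨v, Submodule.mem_span_singleton_self v⟩ ⊗ₜ (r • a), by simp [ha, tmul_smul]⟩

lemma exists_eq_tmul_of_lTensor_eq_tmul [Module.Flat R V] {A B : Type}
    [AddCommGroup A] [Module R A] [AddCommGroup B] [Module R B]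
    {f : A →ₗ[R] B} (hf : Function.Injective f) {w : V} {φ : Module.Dual R V} (hφ : φ w = 1)
    {t : V ⊗[R] A} {β : B} (ht : f.lTensor V t = w ⊗ₜ β) : ∃ a : A, t = w ⊗ₜ a := by
  let ev : ∀ M : Type, [AddCommGroup M] → [Module R M] → V ⊗[R] M →ₗ[R] M :=
    fun M _ _ => (TensorProduct.lid R M).toLinearMap ∘ₗ φ.rTensor M
  have hev : f ∘ₗ ev A = ev B ∘ₗ f.lTensor V := TensorProduct.ext' fun x a => by simp [ev]
  refine ⟨ev A t, Module.Flat.lTensor_preserves_injective_linearMap f hf ?_⟩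
  rw [ht, LinearMap.lTensor_tmul, ← LinearMap.comp_apply, hev, LinearMap.comp_apply, ht]
  simp [ev, hφ]

end

lemma IsDiscreteValuationRing.exists_smul_eq_and_dual_eq_one [IsDomain R]
    [IsDiscreteValuationRing R] {V : Type} [AddCommGroup V] [Module R V] [Module.Free R V]
    {v : V} (hv : v ≠ 0) : ∃ (c : R) (w : V) (φ : Module.Dual R V), c • w = v ∧ φ w = 1 := by
  classical
  let b := Module.Free.chooseBasis R V
  have hsupp : (b.repr v).support.Nonempty := by simpa using hv
  obtain ⟨j, -, hmin⟩ := (b.repr v).support.exists_min_image (fun i => addVal R (b.repr v i)) hsupp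
  have hdvd : ∀ i, b.repr v j ∣ b.repr v i := fun i => by
    by_cases hi : i ∈ (b.repr v).support
    · exact addVal_le_iff_dvd.mp (hmin i hi)
    · simp [Finsupp.notMem_support_iff.mp hi]
  choose d hd using hdvd
  set c := b.repr v j
  have hw : c • (b.repr v).sum (fun i _ => d i • b i) = v := by
    conv_rhs => rw [← b.linearCombination_repr v, Finsupp.linearCombination_apply]
    simp only [Finsupp.sum, Finset.smul_sum, smul_smul, ← hd]
  refine ⟨c, _, b.coord j, hw, mul_left_cancel₀ (left_ne_zero_of_smul (hw ▸ hv) : c ≠ 0) ?_⟩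
  rw [← smul_eq_mul, ← map_smul, hw, mul_one]
  rfl

theorem stmt8 [IsDomain R] [IsDiscreteValuationRing R]
    {A B V : Type} [CommRing A] [HopfAlgebra R A] [CommRing B] [HopfAlgebra R B]
    [Module.Flat R B]
    (f : A →ₐc[R] B) (hf : Function.Injective f)
    [AddCommGroup V] [Module R V] [Module.Free R V]
    (σ : V →ₗ[R] V ⊗[R] A) (v : V) :
    IsSemiInvariant ((TensorProduct.map (LinearMap.id : V →ₗ[R] V) f.toLinearMap) ∘ₗ σ) v ↔
      IsSemiInvariant σ v := by
  simp only [isSemiInvariant_iff_exists_tmul, LinearMap.comp_apply]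
  refine ⟨fun ⟨β, hβ⟩ => ?_, fun ⟨a, ha⟩ => ⟨f a, by rw [ha]; rfl⟩⟩
  rcases eq_or_ne v 0 with rfl | hv
  · exact ⟨0, by simp⟩
  obtain ⟨c, w, φ, rfl, hφ⟩ := IsDiscreteValuationRing.exists_smul_eq_and_dual_eq_one (R := R) hv
  have hc : c ∈ nonZeroDivisors R := mem_nonZeroDivisors_of_ne_zero (left_ne_zero_of_smul hv)
  have hw : f.toLinearMap.lTensor V (σ w) = w ⊗ₜ β :=
    Module.Flat.isSMulRegular_of_nonZeroDivisors hc <| by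
      show c • _ = c • _
      rw [smul_tmul', ← hβ, map_smul, map_smul]; rfl
  obtain ⟨a, ha⟩ := exists_eq_tmul_of_lTensor_eq_tmul hf hφ hw
  exact ⟨a, by rw [map_smul, ha, smul_tmul']⟩
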